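/- The type-DD bimodule for the Dehn twist τ_μ of the torus satisfies ∂² = 0: with generators p, q, r over two commuting copies of the torus algebra, and differentials ∂p = (ρ₁σ₃ + ρ₁₂₃σ₁₂₃)⊗q + (ρ₃σ₁₂)⊗r, ∂q = (ρ₂₃σ₂)⊗r, ∂r = ρ₂⊗p + σ₁⊗q (with idempotents chosen so all terms are nonzero). -/
import Mathlib


/-! The torus algebra `A(T²,0)`: the path algebra over `F₂` of the quiver
with two vertices `ι₀, ι₁` and arrows `ρ₁ : ι₀ → ι₁`, `ρ₂ : ι₁ → ι₀`,
`ρ₃ : ι₀ → ι₁`, modulo `ρ₂ρ₁ = 0` and `ρ₃ρ₂ = 0`.  Here `a * b` denotes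
"`a` followed by `b`", so e.g. `ρ₁₂ = ρ₁ * ρ₂`.  We present it as a quotient
of the free algebra on the five generators by the path-algebra relations. -/

inductive TV : Type | i0 | i1 | r1 | r2 | r3
deriving DecidableEq

abbrev F2 := ZMod 2

open TV in
/-- The path-algebra relations for the torus algebra. -/
inductive TorusRel : FreeAlgebra F2 TV → FreeAlgebra F2 TV → Prop
  | unit : TorusRel (FreeAlgebra.ι F2 i0 + FreeAlgebra.ι F2 i1) 1
  | orth01 : TorusRel (FreeAlgebra.ι F2 i0 * FreeAlgebra.ι F2 i1) 0
  | orth10 : TorusRel (FreeAlgebra.ι F2 i1 * FreeAlgebra.ι F2 i0) 0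
  | idem0 : TorusRel (FreeAlgebra.ι F2 i0 * FreeAlgebra.ι F2 i0) (FreeAlgebra.ι F2 i0)
  | idem1 : TorusRel (FreeAlgebra.ι F2 i1 * FreeAlgebra.ι F2 i1) (FreeAlgebra.ι F2 i1)
  | pos1 : TorusRel (FreeAlgebra.ι F2 i0 * FreeAlgebra.ι F2 r1 * FreeAlgebra.ι F2 i1)
      (FreeAlgebra.ι F2 r1)
  | pos2 : TorusRel (FreeAlgebra.ι F2 i1 * FreeAlgebra.ι F2 r2 * FreeAlgebra.ι F2 i0)
      (FreeAlgebra.ι F2 r2)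
  | pos3 : TorusRel (FreeAlgebra.ι F2 i0 * FreeAlgebra.ι F2 r3 * FreeAlgebra.ι F2 i1)
      (FreeAlgebra.ι F2 r3)
  | rel21 : TorusRel (FreeAlgebra.ι F2 r2 * FreeAlgebra.ι F2 r1) 0
  | rel32 : TorusRel (FreeAlgebra.ι F2 r3 * FreeAlgebra.ι F2 r2) 0

/-- The torus algebra `A(T²,0)`. -/
abbrev TorusAlg : Type := RingQuot TorusRel

/-- The idempotent `ι₀`. -/
def ι0 : TorusAlg := RingQuot.mkAlgHom F2 TorusRel (FreeAlgebra.ι F2 TV.i0)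
/-- The idempotent `ι₁`. -/
def ι1 : TorusAlg := RingQuot.mkAlgHom F2 TorusRel (FreeAlgebra.ι F2 TV.i1)
/-- The arrow `ρ₁ : ι₀ → ι₁`. -/
def ρ1 : TorusAlg := RingQuot.mkAlgHom F2 TorusRel (FreeAlgebra.ι F2 TV.r1)
/-- The arrow `ρ₂ : ι₁ → ι₀`. -/
def ρ2 : TorusAlg := RingQuot.mkAlgHom F2 TorusRel (FreeAlgebra.ι F2 TV.r2)
/-- The arrow `ρ₃ : ι₀ → ι₁`. -/
def ρ3 : TorusAlg := RingQuot.mkAlgHom F2 TorusRel (FreeAlgebra.ι F2 TV.r3)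

open scoped TensorProduct

/-- Two commuting copies of the torus algebra: the first tensor factor is
written with `ρ`'s and the second with `σ`'s. -/
abbrev TorusAlg2 : Type := TorusAlg ⊗[F2] TorusAlg

lemma rel21' : ρ2 * ρ1 = 0 := by
  have h := RingQuot.mkAlgHom_rel F2 TorusRel.rel21
  simpa [ρ2, ρ1, map_mul] using h

lemma rel32' : ρ3 * ρ2 = 0 := by
  have h := RingQuot.mkAlgHom_rel F2 TorusRel.rel32
  simpa [ρ3, ρ2, map_mul] using h

lemma rel21x (x : TorusAlg) : ρ2 * (ρ1 * x) = 0 := by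
  rw [← mul_assoc, rel21', zero_mul]

lemma rel32x (x : TorusAlg) : ρ3 * (ρ2 * x) = 0 := by
  rw [← mul_assoc, rel32', zero_mul]

lemma char2 (x : TorusAlg2) : x + x = 0 := by
  have : ((2 : F2) : F2) = 0 := by decide
  rw [← two_smul F2 x, show (2 : F2) = 0 by decide, zero_smul]

/-- `∂² = 0` for the type-DD bimodule of the Dehn twist `τ_μ` of the torus:
generators `p, q, r`, with `∂p = (ρ₁σ₃ + ρ₁₂₃σ₁₂₃)⊗q + (ρ₃σ₁₂)⊗r`,
`∂q = (ρ₂₃σ₂)⊗r`, `∂r = ρ₂⊗p + σ₁⊗q`, extended by the Leibniz rule over the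
two commuting actions (the algebras have zero differential).  An element
`a·p + b·q + c·r` is recorded by its coefficient triple `(a, b, c)` with
coefficients in `A(T²,0) ⊗_{F₂} A(T²,0)` (`ρ`'s in the first factor, `σ`'s in
the second). -/
theorem CFDD_tau_mu_d_squared
    (d : TorusAlg2 × TorusAlg2 × TorusAlg2 → TorusAlg2 × TorusAlg2 × TorusAlg2)
    (hd : ∀ a b c : TorusAlg2,
      d (a, b, c) = (c * (ρ2 ⊗ₜ[F2] 1),
        a * (ρ1 ⊗ₜ[F2] ρ3 + (ρ1 * ρ2 * ρ3) ⊗ₜ[F2] (ρ1 * ρ2 * ρ3)) + c * ((1 : TorusAlg) ⊗ₜ[F2] ρ1),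
        a * (ρ3 ⊗ₜ[F2] (ρ1 * ρ2)) + b * ((ρ2 * ρ3) ⊗ₜ[F2] ρ2))) :
    ∀ m, d (d m) = 0 := by
  rintro ⟨a, b, c⟩
  rw [hd, hd]
  simp only [mul_add, add_mul, mul_assoc, Algebra.TensorProduct.tmul_mul_tmul,
    rel21', rel32', rel21x, rel32x, one_mul, mul_one, mul_zero, zero_mul,
    TensorProduct.zero_tmul, TensorProduct.tmul_zero, add_zero, zero_add]
  refine Prod.ext ?_ (Prod.ext ?_ ?_) <;> simp [char2]
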